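/- arXiv:2312.05022 — 6 statements merged into one kernel-verified Lean document; each statement's English description precedes it below -/
import Mathlib

section
/- Let K ≥ 1 and k = (K−1)/(K+1). For A ∈ ℝ²ˣ² with conformal coordinates (a₊, a₋), the condition ‖A − R‖² ≤ K det(A − R) for all R ∈ SO(2) is equivalent to |a₋| ≤ k·|1 − |a₊||. -/
/-!
Under `z ↦ (Re z, Im z)` the matrix `toMat a₊ a₋` acts as `z ↦ a₊ z + a₋ z̄`; rotating `z` so that
both terms share an argument shows its operator norm is `|a₊| + |a₋|`, and its determinant is
`|a₊|² - |a₋|²`. Rotations are exactly `toMat w 0` with `|w| = 1`, so at the rotation `w` the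
condition reads `(t + m)² ≤ K (t² - m²)` with `t = |a₊ - w|`, `m = |a₋|`, i.e. `m (K + 1) ≤ t (K - 1)`.
This is monotone in `t`, whose minimum over the unit circle is `|1 - |a₊||`.
-/

open Matrix

/-- Operator (ℓ²→ℓ²) norm of a real 2×2 matrix. -/
noncomputable def opNorm (A : Matrix (Fin 2) (Fin 2) ℝ) : ℝ :=
  ‖Matrix.toEuclideanCLM (𝕜 := ℝ) A‖

/-- The real 2×2 matrix corresponding, under the identification ℝ² ≅ ℂ, to the
real-linear map `z ↦ a₊ z + a₋ conj z`. -/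
noncomputable def toMat (ap am : ℂ) : Matrix (Fin 2) (Fin 2) ℝ :=
  !![ap.re + am.re, -ap.im + am.im; ap.im + am.im, ap.re - am.re]

/-- The rotation group SO(2) as a set of 2×2 real matrices. -/
def SO2 : Set (Matrix (Fin 2) (Fin 2) ℝ) := {R | R * Rᵀ = 1 ∧ R.det = 1}

open Complex ComplexConjugate

lemma toMat_sub (b c b' c' : ℂ) : toMat b c - toMat b' c' = toMat (b - b') (c - c') := by
  ext i j
  fin_cases i <;> fin_cases j <;> simp [toMat] <;> ring

lemma det_toMat (b c : ℂ) : (toMat b c).det = ‖b‖ ^ 2 - ‖c‖ ^ 2 := by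
  simp only [det_fin_two, toMat, of_apply, cons_val', cons_val_zero, cons_val_one,
    empty_val', cons_val_fin_one, Complex.sq_norm, normSq_apply]
  ring

lemma toEuclideanCLM_toMat_repr (b c z : ℂ) :
    toEuclideanCLM (𝕜 := ℝ) (toMat b c) (orthonormalBasisOneI.repr z) =
      orthonormalBasisOneI.repr (b * z + c * conj z) := by
  ext i
  fin_cases i <;>
    simp [toMat, orthonormalBasisOneI_repr_apply, mulVec, dotProduct, Fin.sum_univ_two] <;> ring

lemma norm_mul_add_mul_conj_le (b c z : ℂ) : ‖b * z + c * conj z‖ ≤ (‖b‖ + ‖c‖) * ‖z‖ :=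
  calc ‖b * z + c * conj z‖ ≤ ‖b * z‖ + ‖c * conj z‖ := norm_add_le _ _
    _ = (‖b‖ + ‖c‖) * ‖z‖ := by rw [norm_mul, norm_mul, norm_conj, add_mul]

lemma exists_norm_eq_one_norm_mul_add_mul_conj_eq (b c : ℂ) :
    ∃ u : ℂ, ‖u‖ = 1 ∧ ‖b * u + c * conj u‖ = ‖b‖ + ‖c‖ := by
  set θ : ℝ := (arg c - arg b) / 2
  refine ⟨exp (θ * I), norm_exp_ofReal_mul_I θ, ?_⟩
  have h_common_arg : b * exp (θ * I) + c * conj (exp (θ * I)) =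
      (‖b‖ + ‖c‖ : ℝ) * exp (((arg b + arg c) / 2 : ℝ) * I) := by
    rw [← exp_conj, map_mul, conj_ofReal, conj_I]
    conv_lhs => rw [← norm_mul_exp_arg_mul_I b, ← norm_mul_exp_arg_mul_I c]
    simp only [mul_assoc, ← exp_add, θ]
    push_cast
    ring_nf
  rw [h_common_arg, norm_mul, norm_exp_ofReal_mul_I, mul_one, norm_real,
    Real.norm_of_nonneg (by positivity)]

lemma opNorm_toMat (b c : ℂ) : opNorm (toMat b c) = ‖b‖ + ‖c‖ := by
  set e := orthonormalBasisOneI.repr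
  apply le_antisymm
  · refine ContinuousLinearMap.opNorm_le_bound _ (by positivity) fun x => ?_
    rw [← e.apply_symm_apply x, toEuclideanCLM_toMat_repr, e.norm_map, e.norm_map]
    exact norm_mul_add_mul_conj_le b c _
  · obtain ⟨u, hu, hmax⟩ := exists_norm_eq_one_norm_mul_add_mul_conj_eq b c
    have := (toEuclideanCLM (𝕜 := ℝ) (toMat b c)).le_opNorm (e u)
    rwa [toEuclideanCLM_toMat_repr, e.norm_map, e.norm_map, hu, hmax, mul_one] at this

lemma SO2_eq_image_sphere : SO2 = (toMat · 0) '' Metric.sphere 0 1 := by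
  ext R
  simp only [Set.mem_image, mem_sphere_zero_iff_norm]
  constructor
  · rintro ⟨hRRt, hdet⟩
    have h00 := congrFun₂ hRRt 0 0
    have h01 := congrFun₂ hRRt 0 1
    have h11 := congrFun₂ hRRt 1 1
    simp only [mul_apply, transpose_apply, Fin.sum_univ_two, one_apply, if_true, zero_ne_one,
      if_false] at h00 h01 h11
    rw [det_fin_two] at hdet
    have hd : R 1 1 = R 0 0 ∧ R 1 0 = -R 0 1 := by
      constructor <;> nlinarith [sq_nonneg (R 1 1 - R 0 0), sq_nonneg (R 1 0 + R 0 1)]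
    refine ⟨⟨R 0 0, -R 0 1⟩, ?_, ?_⟩
    · rw [Complex.norm_def, normSq_apply, Real.sqrt_eq_one]
      linarith
    · ext i j
      fin_cases i <;> fin_cases j <;> simp [toMat, hd.1, hd.2]
  · rintro ⟨w, hw, rfl⟩
    have hw' : w.re * w.re + w.im * w.im = 1 := by
      rw [← normSq_apply, normSq_eq_norm_sq, hw, one_pow]
    constructor
    · ext i j
      fin_cases i <;> fin_cases j <;>
        simp [toMat, mul_apply, Fin.sum_univ_two] <;> linarith
    · rw [det_toMat, hw, norm_zero]; norm_num

lemma sq_add_le_mul_sq_sub_sq_iff {t m : ℝ} (K : ℝ) (ht : 0 ≤ t) (hm : 0 ≤ m) :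
    (t + m) ^ 2 ≤ K * (t ^ 2 - m ^ 2) ↔ m * (K + 1) ≤ t * (K - 1) := by
  rcases (add_nonneg ht hm).eq_or_lt with h0 | h0
  · obtain ⟨rfl, rfl⟩ : t = 0 ∧ m = 0 := ⟨by linarith, by linarith⟩
    simp
  · have : (t + m) ^ 2 ≤ K * (t ^ 2 - m ^ 2) ↔ t + m ≤ K * (t - m) := by
      rw [sq, show K * (t ^ 2 - m ^ 2) = K * (t - m) * (t + m) by ring]
      exact mul_le_mul_iff_left₀ h0
    rw [this]
    constructor <;> intro h <;> linarith

lemma exists_norm_eq_one_norm_sub_eq (a : ℂ) : ∃ w : ℂ, ‖w‖ = 1 ∧ ‖a - w‖ = |1 - ‖a‖| := by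
  refine ⟨exp (arg a * I), norm_exp_ofReal_mul_I _, ?_⟩
  nth_rw 1 [← norm_mul_exp_arg_mul_I a]
  rw [← sub_one_mul, norm_mul, norm_exp_ofReal_mul_I, mul_one, ← ofReal_one, ← ofReal_sub,
    norm_real, Real.norm_eq_abs, abs_sub_comm]

theorem stmt2 (K : ℝ) (hK : 1 ≤ K) (ap am : ℂ) :
    (∀ R ∈ SO2, opNorm (toMat ap am - R) ^ 2 ≤ K * (toMat ap am - R).det) ↔
      ‖am‖ ≤ (K - 1) / (K + 1) * |1 - ‖ap‖| := by
  calc (∀ R ∈ SO2, opNorm (toMat ap am - R) ^ 2 ≤ K * (toMat ap am - R).det)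
      ↔ ∀ w : ℂ, ‖w‖ = 1 → ‖am‖ * (K + 1) ≤ ‖ap - w‖ * (K - 1) := by
        simp only [SO2_eq_image_sphere, Set.forall_mem_image, mem_sphere_zero_iff_norm, toMat_sub,
          sub_zero, opNorm_toMat, det_toMat, sq_add_le_mul_sq_sub_sq_iff K (norm_nonneg _) (norm_nonneg am)]
    _ ↔ ‖am‖ * (K + 1) ≤ |1 - ‖ap‖| * (K - 1) := by
        constructor
        · obtain ⟨w, hw, hdist⟩ := exists_norm_eq_one_norm_sub_eq ap
          exact fun h => hdist ▸ h w hw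
        · refine fun h w hw => h.trans (mul_le_mul_of_nonneg_right ?_ (by linarith))
          simpa [hw, abs_sub_comm] using abs_norm_sub_norm_le ap w
    _ ↔ ‖am‖ ≤ (K - 1) / (K + 1) * |1 - ‖ap‖| := by
        rw [div_mul_eq_mul_div, le_div_iff₀ (by linarith), mul_comm (K - 1)]
end

section
/- Let λ ≥ 1 and K = λ. Define 𝒜 = {A ∈ Sym(2) : ‖A‖ ≤ 1 and |tr(A)| ≤ ((λ−1)/(λ+1))(1 + det A)}, and let A₀ = diag(1, −1). Then 𝒜 ⊆ A₀·ℰ ∩ {M : ‖M‖ ≤ 1}, where ℰ = {X ∈ ℝ²ˣ² : ‖R − X‖² ≤ K det(R − X) for all R ∈ SO(2)} is the K-quasiconformal envelope of SO(2). -/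
open Matrix

/-- The reflection `A₀ = diag(1, -1)`. -/
def A₀ : Matrix (Fin 2) (Fin 2) ℝ := !![1, 0; 0, -1]

/-!
For a real `2 × 2` matrix `M`, `‖M‖² ≤ t` says that `t - MᵀM` is positive semidefinite, i.e. that
its trace and determinant are nonnegative. For a rotation `R = !![a, b; -b, a]` and a symmetric
`A = !![p, q; q, r]`, the matrix `M = R - A₀ A = !![a - p, b - q; q - b, a + r]` has
`tr (MᵀM) = 2 det M + (tr A)²`, so `‖M‖² ≤ λ det M` follows from `det M ≥ 0` together with
`λ (tr A)² ≤ (λ - 1)² det M`.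

By Cauchy–Schwarz, `det M = 1 - det A - ⟪(a, b), (p - r, 2q)⟫ ≥ 1 - det A - w`, where
`w = √((p - r)² + 4q²)` is the gap between the eigenvalues `μ₁ ≥ μ₂` of `A`, and
`1 - det A - w = (1 - μ₁)(1 + μ₂) ≥ 0` because `‖A‖ ≤ 1`. Since
`4 (1 - det A - w) = (2 - w)² - (tr A)²` and `(λ - 1)² + 4λ = (λ + 1)²`, the second inequality is
the square of the trace hypothesis `(λ + 1) |tr A| ≤ (λ - 1) (1 + det A) ≤ (λ - 1) (2 - w)`.
-/

theorem quadratic_form_nonneg_iff (α β γ : ℝ) :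
    (∀ x y : ℝ, 0 ≤ α * x ^ 2 + 2 * β * x * y + γ * y ^ 2) ↔ 0 ≤ α + γ ∧ β ^ 2 ≤ α * γ := by
  constructor
  · intro h
    have hα := h 1 0
    have hγ := h 0 1
    have hdisc : discrim α (2 * β) γ ≤ 0 := discrim_le_zero fun x => by linarith [h x 1]
    rw [discrim] at hdisc
    constructor <;> nlinarith
  · rintro ⟨hsum, hdet⟩ x y
    have hα : 0 ≤ α := by nlinarith [sq_nonneg β]
    have hγ : 0 ≤ γ := by nlinarith [sq_nonneg β]
    rcases hα.eq_or_lt with rfl | hα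
    · obtain rfl : β = 0 := by nlinarith [sq_nonneg β]
      nlinarith [sq_nonneg y]
    · refine (mul_nonneg_iff_of_pos_left hα).1 ?_
      have hsq : α * (α * x ^ 2 + 2 * β * x * y + γ * y ^ 2) =
          (α * x + β * y) ^ 2 + (α * γ - β ^ 2) * y ^ 2 := by ring
      rw [hsq]
      exact add_nonneg (sq_nonneg _) (mul_nonneg (by linarith) (sq_nonneg y))

theorem opNorm_nonneg (M : Matrix (Fin 2) (Fin 2) ℝ) : 0 ≤ opNorm M := norm_nonneg _

theorem sq_opNorm_le_iff_forall (M : Matrix (Fin 2) (Fin 2) ℝ) (t : ℝ) :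
    opNorm M ^ 2 ≤ t ↔ ∀ x y : ℝ,
      (M 0 0 * x + M 0 1 * y) ^ 2 + (M 1 0 * x + M 1 1 * y) ^ 2 ≤ t * (x ^ 2 + y ^ 2) := by
  have norm_sq (v : EuclideanSpace ℝ (Fin 2)) : ‖v‖ ^ 2 = v 0 ^ 2 + v 1 ^ 2 := by
    simp [EuclideanSpace.norm_sq_eq, Fin.sum_univ_two]
  rcases lt_or_ge t 0 with ht | ht
  · refine iff_of_false (by nlinarith [opNorm_nonneg M]) fun h => ?_
    nlinarith [h 1 0, sq_nonneg (M 0 0), sq_nonneg (M 1 0)]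
  rw [← Real.le_sqrt (opNorm_nonneg M) ht, opNorm,
    ContinuousLinearMap.opNorm_le_iff (by positivity)]
  have apply_le_iff (v : EuclideanSpace ℝ (Fin 2)) :
      ‖toEuclideanCLM (𝕜 := ℝ) M v‖ ≤ √t * ‖v‖ ↔
        (M 0 0 * v 0 + M 0 1 * v 1) ^ 2 + (M 1 0 * v 0 + M 1 1 * v 1) ^ 2 ≤
          t * (v 0 ^ 2 + v 1 ^ 2) := by
    rw [← pow_le_pow_iff_left₀ (norm_nonneg _) (by positivity) two_ne_zero, mul_pow,
      Real.sq_sqrt ht, norm_sq, norm_sq]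
    simp [Matrix.mulVec, dotProduct, Fin.sum_univ_two]
  simp only [apply_le_iff]
  exact ⟨fun h x y => h (WithLp.toLp 2 ![x, y]), fun h v => h (v 0) (v 1)⟩

theorem sq_opNorm_le_iff (M : Matrix (Fin 2) (Fin 2) ℝ) (t : ℝ) :
    opNorm M ^ 2 ≤ t ↔ (Mᵀ * M).trace ≤ 2 * t ∧ t * (Mᵀ * M).trace ≤ t ^ 2 + M.det ^ 2 := by
  have hform (x y : ℝ) :
      (M 0 0 * x + M 0 1 * y) ^ 2 + (M 1 0 * x + M 1 1 * y) ^ 2 ≤ t * (x ^ 2 + y ^ 2) ↔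
        0 ≤ (t - (M 0 0 ^ 2 + M 1 0 ^ 2)) * x ^ 2 + 2 * -(M 0 0 * M 0 1 + M 1 0 * M 1 1) * x * y +
          (t - (M 0 1 ^ 2 + M 1 1 ^ 2)) * y ^ 2 := by
    rw [← sub_nonneg]; ring_nf
  simp only [sq_opNorm_le_iff_forall, hform, quadratic_form_nonneg_iff, trace_fin_two, det_fin_two,
    mul_apply, transpose_apply, Fin.sum_univ_two]
  constructor <;> rintro ⟨h₁, h₂⟩ <;> constructor <;> linarith

theorem exists_rotation_of_mem_SO2 {R : Matrix (Fin 2) (Fin 2) ℝ} (hR : R ∈ SO2) :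
    ∃ a b : ℝ, a ^ 2 + b ^ 2 = 1 ∧ R = !![a, b; -b, a] := by
  obtain ⟨horth, hdet⟩ := hR
  rw [det_fin_two] at hdet
  have h := congrArg (fun N : Matrix (Fin 2) (Fin 2) ℝ => (N 0 0, N 0 1, N 1 1)) horth
  simp only [mul_apply, transpose_apply, Fin.sum_univ_two, one_apply_eq, Prod.mk.injEq] at h
  obtain ⟨h00, h01, h11⟩ := h
  simp only [one_apply_ne zero_ne_one] at h01
  have h10 : R 1 0 = -R 0 1 := by linear_combination R 1 1 * h01 - R 1 0 * hdet - R 0 1 * h11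
  have h11' : R 1 1 = R 0 0 := by linear_combination R 0 0 * hdet + R 0 1 * h01 - R 1 1 * h00
  exact ⟨R 0 0, R 0 1, by linear_combination h00, by
    conv_lhs => rw [R.eta_fin_two, h10, h11']⟩

theorem sq_opNorm_le_mul_det_of_le {M : Matrix (Fin 2) (Fin 2) ℝ} {K : ℝ} (hK : 1 ≤ K)
    (hdet : 0 ≤ M.det)
    (h : K * ((M 0 0 - M 1 1) ^ 2 + (M 0 1 + M 1 0) ^ 2) ≤ (K - 1) ^ 2 * M.det) :
    opNorm M ^ 2 ≤ K * M.det := by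
  set τ := (M 0 0 - M 1 1) ^ 2 + (M 0 1 + M 1 0) ^ 2
  have htr : (Mᵀ * M).trace = 2 * M.det + τ := by
    simp only [τ, trace_fin_two, det_fin_two, mul_apply, transpose_apply, Fin.sum_univ_two]
    ring
  have hτ : 0 ≤ τ := by positivity
  rw [sq_opNorm_le_iff, htr]
  constructor
  · nlinarith [mul_nonneg (sub_nonneg.2 hK) hdet]
  · nlinarith [mul_nonneg hdet (sub_nonneg.2 h)]

theorem mul_add_mul_le_sqrt {a b : ℝ} (hab : a ^ 2 + b ^ 2 = 1) (u v : ℝ) :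
    a * u + b * v ≤ √(u ^ 2 + v ^ 2) :=
  (le_abs_self _).trans <| Real.abs_le_sqrt <| by nlinarith [sq_nonneg (a * v - b * u)]

theorem sqrt_sub_sq_add_sq_le_one_sub_det {p q r : ℝ} (h : opNorm !![p, q; q, r] ≤ 1) :
    √((p - r) ^ 2 + (2 * q) ^ 2) ≤ 1 - (p * r - q ^ 2) := by
  have := (sq_opNorm_le_iff _ 1).1 (pow_le_one₀ (opNorm_nonneg _) h)
  obtain ⟨htr, hdet⟩ : p ^ 2 + 2 * q ^ 2 + r ^ 2 ≤ 2 ∧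
      p ^ 2 + 2 * q ^ 2 + r ^ 2 ≤ 1 + (p * r - q ^ 2) ^ 2 := by
    simpa [trace_fin_two, det_fin_two, mul_apply, Fin.sum_univ_two, ← sq, add_assoc, two_mul]
      using this
  have hc : 0 ≤ 1 - (p * r - q ^ 2) := by nlinarith [sq_nonneg (p - r)]
  rw [Real.sqrt_le_left hc]
  nlinarith

theorem rotation_sub_A₀_mul_det_bounds {lam p q r a b : ℝ} (hlam : 1 ≤ lam)
    (hab : a ^ 2 + b ^ 2 = 1) (hA : opNorm !![p, q; q, r] ≤ 1)
    (htr : |p + r| ≤ (lam - 1) / (lam + 1) * (1 + (p * r - q ^ 2))) :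
    0 ≤ (a - p) * (a + r) + (b - q) ^ 2 ∧
      lam * (p + r) ^ 2 ≤ (lam - 1) ^ 2 * ((a - p) * (a + r) + (b - q) ^ 2) := by
  set w := √((p - r) ^ 2 + (2 * q) ^ 2)
  have hw : w ^ 2 = (p - r) ^ 2 + (2 * q) ^ 2 := Real.sq_sqrt (by positivity)
  have hwc : w ≤ 1 - (p * r - q ^ 2) := sqrt_sub_sq_add_sq_le_one_sub_det hA
  have hD : 1 - (p * r - q ^ 2) - w ≤ (a - p) * (a + r) + (b - q) ^ 2 := by
    have := mul_add_mul_le_sqrt hab (p - r) (2 * q)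
    linear_combination this - hab
  have htr' : (lam + 1) * |p + r| ≤ (lam - 1) * (2 - w) := by
    rw [div_mul_eq_mul_div, le_div_iff₀ (by linarith)] at htr
    nlinarith
  have hsq : (lam + 1) ^ 2 * (p + r) ^ 2 ≤ (lam - 1) ^ 2 * (2 - w) ^ 2 := by
    simpa only [mul_pow, sq_abs] using pow_le_pow_left₀ (by positivity) htr' 2
  have hmain : lam * (p + r) ^ 2 ≤ (lam - 1) ^ 2 * (1 - (p * r - q ^ 2) - w) := by
    linear_combination hsq / 4 + (lam - 1) ^ 2 / 4 * hw
  exact ⟨by linarith, hmain.trans (mul_le_mul_of_nonneg_left hD (sq_nonneg _))⟩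

theorem A₀_mul_self : A₀ * A₀ = 1 := by
  rw [A₀, mul_fin_two, one_fin_two]
  norm_num

theorem rotation_sub_A₀_mul (a b p q r : ℝ) :
    !![a, b; -b, a] - A₀ * !![p, q; q, r] = !![a - p, b - q; -(b - q), a + r] := by
  rw [A₀, mul_fin_two]
  ext i j
  fin_cases i <;> fin_cases j <;> simp [neg_add_eq_sub]

theorem stmt4 (lam : ℝ) (hlam : 1 ≤ lam) :
    {A : Matrix (Fin 2) (Fin 2) ℝ | Aᵀ = A ∧ opNorm A ≤ 1 ∧
        |A.trace| ≤ (lam - 1) / (lam + 1) * (1 + A.det)} ⊆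
      ((fun X => A₀ * X) ''
          {X : Matrix (Fin 2) (Fin 2) ℝ |
            ∀ R ∈ SO2, opNorm (R - X) ^ 2 ≤ lam * (R - X).det}) ∩
        {M | opNorm M ≤ 1} := by
  rintro A ⟨hsymm, hnorm, htrace⟩
  refine ⟨⟨A₀ * A, fun R hR => ?_, by
    simp only [← mul_assoc, A₀_mul_self, one_mul]⟩, hnorm⟩
  obtain ⟨p, q, r, rfl⟩ : ∃ p q r : ℝ, A = !![p, q; q, r] :=
    have h10 : A 1 0 = A 0 1 := congrFun (congrFun hsymm 0) 1
    ⟨A 0 0, A 0 1, A 1 1, by conv_lhs => rw [A.eta_fin_two, h10]⟩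
  obtain ⟨a, b, hab, rfl⟩ := exists_rotation_of_mem_SO2 hR
  rw [trace_fin_two_of, det_fin_two_of, ← sq] at htrace
  obtain ⟨hdet, hdistortion⟩ := rotation_sub_A₀_mul_det_bounds hlam hab hnorm htrace
  rw [rotation_sub_A₀_mul]
  refine sq_opNorm_le_mul_det_of_le hlam ?_ ?_ <;>
    simp only [det_fin_two_of, of_apply, cons_val', cons_val_zero, cons_val_one, empty_val',
      cons_val_fin_one] <;>
    linarith
end

section
/- Let Y = diag(λ₁, λ₂) with λ₁ ≥ λ₂ > 0 and λ⁻¹ ≤ λ₁λ₂ ≤ λ for some λ ≥ 1. Set X = (Y − Id)(Y + Id)⁻¹ and A₀ = diag(1, −1). Then there exist constants c₁, c₂ > 0 depending only on λ such that c₁/‖Y‖ ≤ ‖X − A₀‖ ≤ c₂/‖Y‖, where ‖·‖ is the operator norm. -/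
open Matrix

lemma euclid_apply (A : Matrix (Fin 2) (Fin 2) ℝ) (x : EuclideanSpace ℝ (Fin 2)) (i : Fin 2) :
    (Matrix.toEuclideanCLM (𝕜 := ℝ) A x) i = A.mulVec (fun j => x j) i := by
  have := Matrix.ofLp_toEuclideanCLM (n := Fin 2) (𝕜 := ℝ) A x
  have h2 := congrFun this i
  simpa using h2

lemma opNorm_diag (a b : ℝ) : opNorm !![a, 0; 0, b] = max |a| |b| := by
  apply le_antisymm
  · apply ContinuousLinearMap.opNorm_le_bound _ (le_max_iff.mpr (Or.inl (abs_nonneg a)))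
    intro x
    have h0 : (Matrix.toEuclideanCLM (𝕜 := ℝ) !![a, 0; 0, b] x) 0 = a * x 0 := by
      rw [euclid_apply]; simp [Matrix.mulVec, dotProduct, Fin.sum_univ_two]
    have h1 : (Matrix.toEuclideanCLM (𝕜 := ℝ) !![a, 0; 0, b] x) 1 = b * x 1 := by
      rw [euclid_apply]; simp [Matrix.mulVec, dotProduct, Fin.sum_univ_two]
    rw [EuclideanSpace.norm_eq, EuclideanSpace.norm_eq]
    simp only [Fin.sum_univ_two, h0, h1]
    rw [show max |a| |b| * Real.sqrt (‖x 0‖ ^ 2 + ‖x 1‖ ^ 2)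
        = Real.sqrt ((max |a| |b|)^2 * (‖x 0‖ ^ 2 + ‖x 1‖ ^ 2)) by
      rw [Real.sqrt_mul (by positivity), Real.sqrt_sq (le_max_iff.mpr (Or.inl (abs_nonneg a)))]]
    apply Real.sqrt_le_sqrt
    have ha : |a| ≤ max |a| |b| := le_max_left _ _
    have hb : |b| ≤ max |a| |b| := le_max_right _ _
    have ha2 : a^2 ≤ (max |a| |b|)^2 := by
      rw [← sq_abs a]; exact pow_le_pow_left₀ (abs_nonneg a) ha 2
    have hb2 : b^2 ≤ (max |a| |b|)^2 := by
      rw [← sq_abs b]; exact pow_le_pow_left₀ (abs_nonneg b) hb 2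
    simp only [norm_mul, Real.norm_eq_abs]
    rw [mul_pow, mul_pow, sq_abs, sq_abs, sq_abs, sq_abs]
    nlinarith [sq_nonneg (x 0), sq_nonneg (x 1)]
  · rcases le_total |a| |b| with h | h
    · rw [max_eq_right h]
      have : ‖Matrix.toEuclideanCLM (𝕜 := ℝ) !![a, 0; 0, b] (EuclideanSpace.single 1 1)‖
          ≤ opNorm !![a, 0; 0, b] * ‖(EuclideanSpace.single 1 (1:ℝ) : EuclideanSpace ℝ (Fin 2))‖ :=
        ContinuousLinearMap.le_opNorm _ _
      rw [EuclideanSpace.norm_single, norm_one, mul_one] at this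
      refine le_trans (le_of_eq ?_) this
      rw [EuclideanSpace.norm_eq]
      simp only [Fin.sum_univ_two, euclid_apply]
      simp [Matrix.mulVec, dotProduct, Fin.sum_univ_two, EuclideanSpace.single_apply,
        Real.sqrt_sq_eq_abs]
    · rw [max_eq_left h]
      have : ‖Matrix.toEuclideanCLM (𝕜 := ℝ) !![a, 0; 0, b] (EuclideanSpace.single 0 1)‖
          ≤ opNorm !![a, 0; 0, b] * ‖(EuclideanSpace.single 0 (1:ℝ) : EuclideanSpace ℝ (Fin 2))‖ :=
        ContinuousLinearMap.le_opNorm _ _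
      rw [EuclideanSpace.norm_single, norm_one, mul_one] at this
      refine le_trans (le_of_eq ?_) this
      rw [EuclideanSpace.norm_eq]
      simp only [Fin.sum_univ_two, euclid_apply]
      simp [Matrix.mulVec, dotProduct, Fin.sum_univ_two, EuclideanSpace.single_apply,
        Real.sqrt_sq_eq_abs]

theorem stmt5 (lam : ℝ) (hlam : 1 ≤ lam) :
    ∃ c₁ c₂ : ℝ, 0 < c₁ ∧ 0 < c₂ ∧
      ∀ l₁ l₂ : ℝ, l₂ ≤ l₁ → 0 < l₂ → lam⁻¹ ≤ l₁ * l₂ → l₁ * l₂ ≤ lam →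
        c₁ / opNorm (!![l₁, 0; 0, l₂]) ≤
            opNorm ((!![l₁, 0; 0, l₂] - 1) * (!![l₁, 0; 0, l₂] + 1)⁻¹ - A₀) ∧
          opNorm ((!![l₁, 0; 0, l₂] - 1) * (!![l₁, 0; 0, l₂] + 1)⁻¹ - A₀) ≤
            c₂ / opNorm (!![l₁, 0; 0, l₂]) := by
  have hlam0 : 0 < lam := lt_of_lt_of_le one_pos hlam
  refine ⟨lam⁻¹, 2 * lam, by positivity, by positivity, ?_⟩
  intro l₁ l₂ h12 h2 hlo hhi
  have h1 : 0 < l₁ := lt_of_lt_of_le h2 h12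
  -- rewrite the matrix difference
  have hinv : (!![l₁, 0; 0, l₂] + 1)⁻¹ = !![(l₁+1)⁻¹, 0; 0, (l₂+1)⁻¹] := by
    apply inv_eq_right_inv
    rw [Matrix.one_fin_two]
    ext i j
    fin_cases i <;> fin_cases j <;>
      simp [Matrix.mul_apply, Fin.sum_univ_two] <;>
      field_simp
  have hX : (!![l₁, 0; 0, l₂] - 1) * (!![l₁, 0; 0, l₂] + 1)⁻¹ - A₀
      = !![-(2/(l₁+1)), 0; 0, 2*l₂/(l₂+1)] := by
    rw [hinv, A₀, Matrix.one_fin_two]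
    ext i j
    fin_cases i <;> fin_cases j <;>
      simp [Matrix.mul_apply, Fin.sum_univ_two] <;>
      field_simp <;> ring
  rw [hX, opNorm_diag, opNorm_diag]
  have hnY : max |l₁| |l₂| = l₁ := by
    rw [abs_of_pos h1, abs_of_pos h2, max_eq_left h12]
  rw [hnY]
  have ha : |-(2/(l₁+1))| = 2/(l₁+1) := by
    rw [abs_neg, abs_of_pos]; positivity
  have hb : |2*l₂/(l₂+1)| = 2*l₂/(l₂+1) := by
    rw [abs_of_pos]; positivity
  rw [ha, hb]
  have hll : 1 ≤ lam * l₁ := by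
    have h0 : 1 ≤ lam * (l₁ * l₂) := by
      rw [← div_le_iff₀' hlam0, one_div]; exact hlo
    nlinarith [sq_nonneg (lam * l₁ - 1), sq_nonneg l₁, mul_pos hlam0 h1]
  constructor
  · -- lower bound: lam⁻¹ / l₁ ≤ 2/(l₁+1) ≤ max
    refine le_trans ?_ (le_max_left _ _)
    rw [div_le_div_iff₀ h1 (by linarith), inv_mul_eq_div, div_le_iff₀ hlam0]
    nlinarith
  · -- upper bound
    apply max_le
    · rw [div_le_div_iff₀ (by linarith) h1]
      nlinarith
    · rw [div_le_div_iff₀ (by positivity) h1]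
      nlinarith [mul_pos h2 h1]
end

section
/- Let Y ∈ Sym(2) be positive definite with λ⁻¹ ≤ det(Y) ≤ λ for λ ≥ 1. Set X = (Y − Id)(Y + Id)⁻¹. Then X is symmetric, ‖X‖ ≤ 1, and |tr(X)| ≤ ((λ−1)/(λ+1))(1 + det X), where ‖·‖ is the operator norm. -/
/-!
For a 2×2 matrix `A` with `D = det (A + 1) ≠ 0`, the Cayley transform `X = (A - 1)(A + 1)⁻¹`
satisfies `tr X = 2 (det A - 1) / D` and `1 + det X = 2 (det A + 1) / D`. For positive definite
`Y` we have `D > 0`, so the trace bound reduces to `|d - 1| ≤ (λ - 1)/(λ + 1) (d + 1)` for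
`d = det Y ∈ [λ⁻¹, λ]`. The norm bound holds in every dimension: writing `v = (Y + 1) w`, we get
`X v = Y w - w`, and `‖Y w - w‖ ≤ ‖Y w + w‖` because `⟪Y w, w⟫ ≥ 0`.
-/

open Matrix

theorem abs_sub_one_le_of_inv_le_of_le {d lam : ℝ} (hd : 0 < d) (h₁ : lam⁻¹ ≤ d)
    (h₂ : d ≤ lam) : |d - 1| ≤ (lam - 1) / (lam + 1) * (d + 1) := by
  have hlam : 0 < lam := hd.trans_le h₂
  have hlam_d : 1 ≤ d * lam := (inv_le_iff_one_le_mul₀ hlam).mp h₁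
  rw [div_mul_eq_mul_div, le_div_iff₀ (by linarith)]
  rcases le_total d 1 with h | h
  · rw [abs_of_nonpos (by linarith)]; nlinarith
  · rw [abs_of_nonneg (by linarith)]; nlinarith

open scoped InnerProductSpace in
theorem norm_sub_le_norm_add_of_re_inner_nonneg {𝕜 E : Type*} [RCLike 𝕜] [NormedAddCommGroup E]
    [InnerProductSpace 𝕜 E] {x y : E} (h : 0 ≤ RCLike.re ⟪x, y⟫_𝕜) : ‖x - y‖ ≤ ‖x + y‖ := by
  rw [← pow_le_pow_iff_left₀ (norm_nonneg _) (norm_nonneg _) two_ne_zero, norm_sub_sq (𝕜 := 𝕜),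
    norm_add_sq (𝕜 := 𝕜)]
  linarith

namespace Matrix

section Cayley

variable {n : Type*} [Fintype n] [DecidableEq n]

theorem IsSymm.sub_one_mul_add_one_inv {R : Type*} [CommRing R] {Y : Matrix n n R}
    (hY : Y.IsSymm) : ((Y - 1) * (Y + 1)⁻¹).IsSymm := by
  rw [IsSymm, transpose_mul, transpose_nonsing_inv, transpose_add, transpose_sub, transpose_one,
    hY.eq]
  by_cases h : IsUnit (Y + 1).det
  · have hY1 : Y - 1 = (Y + 1) - (2 : R) • 1 := by rw [two_smul]; abel
    rw [hY1, mul_sub, sub_mul, nonsing_inv_mul _ h, mul_nonsing_inv _ h, mul_smul_one,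
      smul_one_mul]
  · simp [nonsing_inv_apply_not_isUnit _ h]

open scoped ComplexOrder in
theorem PosSemidef.norm_toEuclideanCLM_sub_one_mul_add_one_inv_le_one {𝕜 : Type*} [RCLike 𝕜]
    {Y : Matrix n n 𝕜} (hY : Y.PosSemidef) :
    ‖toEuclideanCLM (n := n) (𝕜 := 𝕜) ((Y - 1) * (Y + 1)⁻¹)‖ ≤ 1 := by
  have hunit : IsUnit (Y + 1).det :=
    (isUnit_iff_isUnit_det _).mp (PosDef.posSemidef_add hY PosDef.one).isUnit
  refine ContinuousLinearMap.opNorm_le_bound _ zero_le_one fun v => ?_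
  set w := toEuclideanCLM (n := n) (𝕜 := 𝕜) (Y + 1)⁻¹ v
  have hv : v = toEuclideanCLM (n := n) (𝕜 := 𝕜) Y w + w := by
    have := congrArg (fun A => toEuclideanCLM (n := n) (𝕜 := 𝕜) A v) (mul_nonsing_inv _ hunit)
    simpa [map_mul, map_add, w] using this.symm
  have hXv : toEuclideanCLM (n := n) (𝕜 := 𝕜) ((Y - 1) * (Y + 1)⁻¹) v =
      toEuclideanCLM (n := n) (𝕜 := 𝕜) Y w - w := by
    simp [map_mul, map_sub, w]
  rw [hXv, one_mul, hv]
  exact norm_sub_le_norm_add_of_re_inner_nonneg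
    ((isPositive_toEuclideanLin_iff.mpr hY).re_inner_nonneg_left w)

end Cayley

theorem det_add_one_fin_two {R : Type*} [CommRing R] (A : Matrix (Fin 2) (Fin 2) R) :
    (A + 1).det = A.det + A.trace + 1 := by
  simp only [det_fin_two, trace_fin_two, add_apply, one_apply_eq, one_apply_ne zero_ne_one,
    one_apply_ne one_ne_zero]
  ring

theorem det_sub_one_fin_two {R : Type*} [CommRing R] (A : Matrix (Fin 2) (Fin 2) R) :
    (A - 1).det = A.det - A.trace + 1 := by
  simp only [det_fin_two, trace_fin_two, sub_apply, one_apply_eq, one_apply_ne zero_ne_one,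
    one_apply_ne one_ne_zero]
  ring

theorem trace_inv_fin_two {K : Type*} [Field K] (A : Matrix (Fin 2) (Fin 2) K) :
    A⁻¹.trace = A.trace / A.det := by
  rw [inv_def, trace_smul, adjugate_fin_two, Ring.inverse_eq_inv', trace_fin_two, trace_fin_two]
  simp [div_eq_inv_mul, add_comm]

section FinTwo

variable {K : Type*} [Field K] {A : Matrix (Fin 2) (Fin 2) K}

theorem trace_sub_one_mul_add_one_inv_fin_two (h : (A + 1).det ≠ 0) :
    ((A - 1) * (A + 1)⁻¹).trace = 2 * (A.det - 1) / (A + 1).det := by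
  have hA : A - 1 = (A + 1) - (2 : K) • 1 := by rw [two_smul]; abel
  rw [hA, sub_mul, mul_nonsing_inv _ h.isUnit, smul_mul, one_mul, trace_sub, trace_smul,
    trace_inv_fin_two, trace_add, trace_one, Fintype.card_fin, Nat.cast_ofNat, smul_eq_mul]
  rw [det_add_one_fin_two] at h ⊢
  field_simp
  ring

theorem one_add_det_sub_one_mul_add_one_inv_fin_two (h : (A + 1).det ≠ 0) :
    1 + ((A - 1) * (A + 1)⁻¹).det = 2 * (A.det + 1) / (A + 1).det := by
  rw [det_mul, det_nonsing_inv, Ring.inverse_eq_inv', ← div_eq_mul_inv, one_add_div h,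
    det_sub_one_fin_two, det_add_one_fin_two]
  ring

end FinTwo

end Matrix

theorem stmt11_general (lam : ℝ) (Y : Matrix (Fin 2) (Fin 2) ℝ)
    (hpos : Y.PosDef) (hdet₁ : lam⁻¹ ≤ Y.det) (hdet₂ : Y.det ≤ lam) :
    ((Y - 1) * (Y + 1)⁻¹)ᵀ = (Y - 1) * (Y + 1)⁻¹ ∧
      opNorm ((Y - 1) * (Y + 1)⁻¹) ≤ 1 ∧
      |((Y - 1) * (Y + 1)⁻¹).trace| ≤
        (lam - 1) / (lam + 1) * (1 + ((Y - 1) * (Y + 1)⁻¹).det) := by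
  have hD : 0 < (Y + 1).det := (hpos.add PosDef.one).det_pos
  have hdet := abs_sub_one_le_of_inv_le_of_le hpos.det_pos hdet₁ hdet₂
  refine ⟨(isHermitian_iff_isSymm.mp hpos.isHermitian).sub_one_mul_add_one_inv.eq,
    hpos.posSemidef.norm_toEuclideanCLM_sub_one_mul_add_one_inv_le_one, ?_⟩
  rw [trace_sub_one_mul_add_one_inv_fin_two hD.ne',
    one_add_det_sub_one_mul_add_one_inv_fin_two hD.ne', mul_div_assoc', abs_div, abs_mul,
    abs_two, abs_of_pos hD]
  exact div_le_div_of_nonneg_right (by linarith) hD.le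

theorem stmt11 (lam : ℝ) (hlam : 1 ≤ lam) (Y : Matrix (Fin 2) (Fin 2) ℝ)
    (hpos : Y.PosDef) (hdet₁ : lam⁻¹ ≤ Y.det) (hdet₂ : Y.det ≤ lam) :
    ((Y - 1) * (Y + 1)⁻¹)ᵀ = (Y - 1) * (Y + 1)⁻¹ ∧
      opNorm ((Y - 1) * (Y + 1)⁻¹) ≤ 1 ∧
      |((Y - 1) * (Y + 1)⁻¹).trace| ≤
        (lam - 1) / (lam + 1) * (1 + ((Y - 1) * (Y + 1)⁻¹).det) :=
  stmt11_general lam Y hpos hdet₁ hdet₂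
end

section
/- Let f: Ω → ℝⁿ be continuous, open, and discrete on an open set Ω, and suppose N := ess-sup over y ∈ f(Ω) of the counting function N(f, Ω, y) = #(f⁻¹(y) ∩ Ω) is finite. Then sup_{y ∈ ℝⁿ} N(f, Ω, y) = N, i.e., every point has at most N preimages. -/
/-!
If `f` is an open map on `Ω`, then any finitely many points `x₁, …, x_k` of a fiber `f⁻¹(y)` have
pairwise disjoint neighbourhoods `Uᵢ ⊆ Ω`, and every point of the open set `⋂ᵢ f(Uᵢ) ∋ y` has at
least `k` preimages. Hence the counting function `y ↦ #(Ω ∩ f⁻¹(y))` is lower semicontinuous, so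
`{y | #(Ω ∩ f⁻¹(y)) > N}` is open; being Lebesgue-null, it is empty.
-/

open MeasureTheory Set Filter Topology

theorem LowerSemicontinuous.le_of_ae_le {α β : Type*} [TopologicalSpace α] [MeasurableSpace α]
    {μ : Measure α} [μ.IsOpenPosMeasure] [LinearOrder β] {g : α → β} (hg : LowerSemicontinuous g)
    {c : β} (h : ∀ᵐ x ∂μ, g x ≤ c) (x : α) : g x ≤ c := by
  by_contra! hx
  have hnull : μ (g ⁻¹' Ioi c) = 0 :=
    measure_mono_null (fun _ hlt hle => not_le_of_gt hlt hle) (ae_iff.1 h)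
  exact ((hg.isOpen_preimage c).eq_empty_of_measure_zero hnull).subset hx

section OpenMap

variable {X Y : Type*} [TopologicalSpace X] [T2Space X] [TopologicalSpace Y]
  {Ω : Set X} {f : X → Y}

theorem eventually_encard_le_encard_fiber (hΩ : IsOpen Ω)
    (hopen : ∀ U ⊆ Ω, IsOpen U → IsOpen (f '' U)) {y : Y} {T : Set X}
    (hT : T ⊆ Ω ∩ f ⁻¹' {y}) (hTfin : T.Finite) :
    ∀ᶠ z in 𝓝 y, T.encard ≤ (Ω ∩ f ⁻¹' {z}).encard := by
  obtain ⟨U, hU, hdisj⟩ := hTfin.t2_separation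
  have hV : ⋂ x ∈ T, f '' (U x ∩ Ω) ∈ 𝓝 y := by
    refine IsOpen.mem_nhds (hTfin.isOpen_biInter fun x _ =>
      hopen _ inter_subset_right ((hU x).2.inter hΩ)) (mem_iInter₂.2 fun x hx => ?_)
    exact ⟨x, ⟨(hU x).1, (hT hx).1⟩, (hT hx).2⟩
  filter_upwards [hV] with z hz
  choose! g hgU hgz using fun x hx => mem_iInter₂.1 hz x hx
  refine encard_le_encard_of_injOn (fun x hx => ⟨(hgU x hx).2, hgz x hx⟩) ?_
  intro a ha b hb hab
  by_contra hne
  exact disjoint_left.1 (hdisj ha hb hne) (hgU a ha).1 (hab ▸ (hgU b hb).1)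

theorem lowerSemicontinuous_encard_fiber (hΩ : IsOpen Ω)
    (hopen : ∀ U ⊆ Ω, IsOpen U → IsOpen (f '' U)) :
    LowerSemicontinuous fun z => (Ω ∩ f ⁻¹' {z}).encard := by
  intro y k hk
  lift k to ℕ using hk.ne_top
  obtain ⟨T, hT, hTcard⟩ := exists_subset_encard_eq (Order.add_one_le_of_lt hk)
  have hTfin : T.Finite := finite_of_encard_eq_coe (k := k + 1) (mod_cast hTcard)
  filter_upwards [eventually_encard_le_encard_fiber hΩ hopen hT hTfin] with z hz
  calc (k : ℕ∞) < k + 1 := mod_cast k.lt_succ_self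
    _ = T.encard := hTcard.symm
    _ ≤ _ := hz

end OpenMap

theorem stmt17_general {n : ℕ} (Ω : Set (EuclideanSpace ℝ (Fin n))) (hΩ : IsOpen Ω)
    (f : EuclideanSpace ℝ (Fin n) → EuclideanSpace ℝ (Fin n))
    (hopen : ∀ U ⊆ Ω, IsOpen U → IsOpen (f '' U))
    (N : ℕ)
    -- the essential supremum of the counting function over `f '' Ω` is at most `N`
    (hN : ∀ᵐ y, y ∈ f '' Ω →
      (Ω ∩ f ⁻¹' {y}).Finite ∧ (Ω ∩ f ⁻¹' {y}).ncard ≤ N) :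
    ∀ y : EuclideanSpace ℝ (Fin n),
      (Ω ∩ f ⁻¹' {y}).Finite ∧ (Ω ∩ f ⁻¹' {y}).ncard ≤ N := by
  have hae : ∀ᵐ y, (Ω ∩ f ⁻¹' {y}).encard ≤ N := by
    filter_upwards [hN] with y hy
    by_cases hy' : y ∈ f '' Ω
    · exact encard_le_coe_iff_finite_ncard_le.2 (hy hy')
    · have hempty : Ω ∩ f ⁻¹' {y} = ∅ :=
        eq_empty_of_forall_notMem fun x hx => hy' ⟨x, hx.1, hx.2⟩
      simp [hempty]
  exact fun y => encard_le_coe_iff_finite_ncard_le.1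
    ((lowerSemicontinuous_encard_fiber hΩ hopen).le_of_ae_le hae y)

theorem stmt17 {n : ℕ} (Ω : Set (EuclideanSpace ℝ (Fin n))) (hΩ : IsOpen Ω)
    (f : EuclideanSpace ℝ (Fin n) → EuclideanSpace ℝ (Fin n))
    (hcont : ContinuousOn f Ω)
    (hopen : ∀ U ⊆ Ω, IsOpen U → IsOpen (f '' U))
    -- discreteness: every fiber is a discrete subset of Ω
    (hdisc : ∀ (y : EuclideanSpace ℝ (Fin n)), ∀ x ∈ Ω ∩ f ⁻¹' {y},
      ∃ V ∈ nhds x, V ∩ (Ω ∩ f ⁻¹' {y}) = {x})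
    (N : ℕ)
    -- the essential supremum of the counting function over `f '' Ω` is at most `N`
    (hN : ∀ᵐ y, y ∈ f '' Ω →
      (Ω ∩ f ⁻¹' {y}).Finite ∧ (Ω ∩ f ⁻¹' {y}).ncard ≤ N) :
    ∀ y : EuclideanSpace ℝ (Fin n),
      (Ω ∩ f ⁻¹' {y}).Finite ∧ (Ω ∩ f ⁻¹' {y}).ncard ≤ N :=
  stmt17_general Ω hΩ f hopen N hN
end

section
/- For n ≥ 3 and any X ∈ SO(n), there exists Y ∈ SO(n) with Y ≠ X and det(X − Y) = 0. Consequently SO(n) ∩ ℰ_{SO(n)} = ∅ for every K ≥ 1, where ℰ_{SO(n)} = {X ∈ ℝⁿˣⁿ : ‖A − X‖ⁿ ≤ K det(A − X) for all A ∈ SO(n)}. -/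
open Matrix

/-- Operator (ℓ²→ℓ²) norm of a real n×n matrix. -/
noncomputable def opNormN {n : ℕ} (A : Matrix (Fin n) (Fin n) ℝ) : ℝ :=
  ‖Matrix.toEuclideanCLM (𝕜 := ℝ) A‖

/-- The rotation group SO(n) as a set of n×n real matrices. -/
def SOn (n : ℕ) : Set (Matrix (Fin n) (Fin n) ℝ) := {A | A * Aᵀ = 1 ∧ A.det = 1}

/-! A rotation `X` and the rotation `X R` with `R = diag(-1, -1, 1, …, 1)` differ by
`X (1 - R)`, which is singular since `R` fixes the third coordinate axis. So `det (A - X)`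
vanishes at some `A ≠ X` in `SO(n)`, while `‖A - X‖ > 0`: no rotation lies in `ℰ_{SO(n)}`. -/

namespace SOn

variable {n : ℕ}

theorem mul_mem {A B : Matrix (Fin n) (Fin n) ℝ} (hA : A ∈ SOn n) (hB : B ∈ SOn n) :
    A * B ∈ SOn n := by
  refine ⟨?_, by rw [det_mul, hA.2, hB.2, mul_one]⟩
  rw [transpose_mul, Matrix.mul_assoc, ← Matrix.mul_assoc B, hB.1, Matrix.one_mul, hA.1]

def halfTurn (n : ℕ) : Matrix (Fin n) (Fin n) ℝ :=
  diagonal fun i => if (i : ℕ) < 2 then -1 else 1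

theorem halfTurn_mem (hn : 2 ≤ n) : halfTurn n ∈ SOn n := by
  obtain ⟨m, rfl⟩ : ∃ m, n = m + 2 := ⟨n - 2, by omega⟩
  refine ⟨?_, ?_⟩
  · rw [halfTurn, diagonal_transpose, diagonal_mul_diagonal, ← diagonal_one]
    congr 1
    ext i
    split_ifs <;> norm_num
  · simp [halfTurn, det_diagonal, Fin.prod_univ_succ]

theorem halfTurn_ne_one (hn : 2 ≤ n) : halfTurn n ≠ 1 := fun h => by
  have h00 := congrFun₂ h ⟨0, by omega⟩ ⟨0, by omega⟩
  norm_num [halfTurn, one_apply] at h00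

theorem det_one_sub_halfTurn (hn : 3 ≤ n) : (1 - halfTurn n).det = 0 := by
  rw [halfTurn, ← diagonal_one, diagonal_sub, det_diagonal]
  exact Finset.prod_eq_zero (Finset.mem_univ ⟨2, by omega⟩) (by simp)

theorem exists_ne_det_sub_eq_zero (hn : 3 ≤ n) {X : Matrix (Fin n) (Fin n) ℝ}
    (hX : X ∈ SOn n) : ∃ Y ∈ SOn n, Y ≠ X ∧ (X - Y).det = 0 := by
  refine ⟨X * halfTurn n, mul_mem hX (halfTurn_mem (by omega)), fun h => ?_, ?_⟩
  · have hXinv : Xᵀ * X = 1 := mul_eq_one_comm.mp hX.1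
    apply halfTurn_ne_one (n := n) (by omega)
    simpa [← Matrix.mul_assoc, hXinv] using congrArg (Xᵀ * ·) h
  · rw [← Matrix.mul_one X, Matrix.mul_assoc, one_mul, ← Matrix.mul_sub, det_mul,
      det_one_sub_halfTurn hn, mul_zero]

end SOn

theorem opNormN_pos {n : ℕ} {A : Matrix (Fin n) (Fin n) ℝ} (hA : A ≠ 0) : 0 < opNormN A :=
  norm_pos_iff.mpr <| (map_ne_zero_iff _ (toEuclideanCLM (𝕜 := ℝ)).injective).mpr hA

theorem stmt19 (n : ℕ) (hn : 3 ≤ n) :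
    (∀ X ∈ SOn n, ∃ Y ∈ SOn n, Y ≠ X ∧ (X - Y).det = 0) ∧
      ∀ K : ℝ, 1 ≤ K →
        SOn n ∩ {X : Matrix (Fin n) (Fin n) ℝ |
          ∀ A ∈ SOn n, opNormN (A - X) ^ n ≤ K * (A - X).det} = ∅ := by
  refine ⟨fun X hX => SOn.exists_ne_det_sub_eq_zero hn hX, fun K _ => ?_⟩
  refine Set.eq_empty_iff_forall_notMem.mpr fun X ⟨hX, hE⟩ => ?_
  obtain ⟨Y, hY, hYX, hdet⟩ := SOn.exists_ne_det_sub_eq_zero hn hX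
  have hdet' : (Y - X).det = 0 := by rw [← neg_sub, det_neg, hdet, mul_zero]
  have hle := hE Y hY
  rw [hdet', mul_zero] at hle
  exact (pow_pos (opNormN_pos (sub_ne_zero.mpr hYX)) n).not_ge hle
end
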